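/- Let A = [[αI_r, C],[D, βI_{n-r}]] with α ≠ β, C ≠ O, D = O, n ≤ 2r, and ‖C‖ < |α - β| (operator norm). Then for every θ in the interval (τ - θ_0, τ + θ_0), where τ = Arg(α - β) and θ_0 = arctan(sqrt(|α-β|²/‖C‖² - 1)), the matrix H_θ(A) has only real eigenvalues, namely Re(e^{-iθ}α) and (1/2)Re(e^{-iθ}(α+β)) ± sqrt((Re(e^{-iθ}ω))² - s_j²(θ)) where s_j(θ) are the singular values of (e^{-iθ}/2)C. -/

import Mathlib

/-!
Write `e = exp (-iθ)`, `a = Re (eα)`, `b = Re (eβ)`. A direct computation gives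
`H_θ(A) = [[a I, N], [-Nᴴ, b I]]` with `N = (e/2) C`. If `(x, y)` is an eigenvector for `z`
with `y ≠ 0`, then `Nᴴ N y = (z - a)(b - z) y`, so `c = (z - a)(b - z)` is an eigenvalue of
`Nᴴ N`: real, nonnegative and at most `‖C‖² / 4`. The condition on `θ` says exactly that
`a - b = |α - β| cos (τ - θ) > ‖C‖`, so `z` is a root of a real quadratic with nonnegative
discriminant `((a - b) / 2)² - c`.
-/

open Matrix Polynomial

theorem Matrix.exists_mulVec_eq_smul_of_isRoot_charpoly {n K : Type*} [Fintype n] [DecidableEq n]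
    [Field K] {M : Matrix n n K} {z : K} (h : M.charpoly.IsRoot z) :
    ∃ v ≠ 0, M *ᵥ v = z • v := by
  rw [← charpoly_toLin', ← Module.End.hasEigenvalue_iff_isRoot_charpoly] at h
  obtain ⟨v, hv⟩ := h.exists_hasEigenvector
  exact ⟨v, hv.2, by simpa using hv.apply_eq_smul⟩

open scoped ComplexOrder in
theorem Matrix.exists_nonneg_ofReal_eq_of_conjTranspose_mul_self_mulVec_eq_smul {m n : Type*}
    [Fintype m] [Fintype n] (N : Matrix m n ℂ) {v : n → ℂ} (hv : v ≠ 0) {μ : ℂ}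
    (h : (Nᴴ * N) *ᵥ v = μ • v) : ∃ c : ℝ, 0 ≤ c ∧ (c : ℂ) = μ := by
  have hpos : 0 < star v ⬝ᵥ v := dotProduct_star_self_pos_iff.mpr hv
  have := (posSemidef_conjTranspose_mul_self N).dotProduct_mulVec_nonneg v
  rw [h, dotProduct_smul, smul_eq_mul] at this
  have hμ : 0 ≤ μ := by simpa [hpos.ne'] using mul_nonneg this (RCLike.inv_pos.mpr hpos).le
  exact ⟨μ.re, (Complex.nonneg_iff.mp hμ).1, (Complex.eq_re_of_ofReal_le hμ).symm⟩

theorem Matrix.eq_or_exists_mul_mulVec_eq_of_fromBlocks_mulVec_eq {m n K : Type*} [Fintype m]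
    [Fintype n] [DecidableEq m] [DecidableEq n] [Field K] {a b z : K} {N : Matrix m n K}
    {M : Matrix n m K} {v : m ⊕ n → K} (hv : v ≠ 0)
    (h : fromBlocks (a • 1) N M (b • 1) *ᵥ v = z • v) :
    z = a ∨ ∃ y ≠ 0, (M * N) *ᵥ y = ((z - a) * (z - b)) • y := by
  obtain ⟨x, y, rfl⟩ : ∃ x y, v = Sum.elim x y :=
    ⟨v ∘ Sum.inl, v ∘ Sum.inr, by ext (_ | _) <;> rfl⟩
  rw [fromBlocks_mulVec, smul_mulVec, smul_mulVec, one_mulVec, one_mulVec] at h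
  have hx : a • x + N *ᵥ y = z • x := funext fun i => by simpa using congrFun h (Sum.inl i)
  have hy : M *ᵥ x + b • y = z • y := funext fun i => by simpa using congrFun h (Sum.inr i)
  have hNy : N *ᵥ y = (z - a) • x := by rw [sub_smul, ← hx]; abel
  have hMx : M *ᵥ x = (z - b) • y := by rw [sub_smul, ← hy]; abel
  by_cases hy0 : y = 0
  · left
    have hx0 : x ≠ 0 := by rintro rfl; exact hv (by simp [hy0])
    rw [hy0, mulVec_zero, eq_comm, smul_eq_zero, sub_eq_zero] at hNy
    exact hNy.resolve_right hx0
  · right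
    refine ⟨y, hy0, ?_⟩
    rw [← mulVec_mulVec, hNy, mulVec_smul, hMx, smul_smul]

theorem Matrix.fromBlocks_one_neg_one_mul_conjTranspose_mul {l m R : Type*} [Fintype l]
    [Fintype m] [DecidableEq l] [DecidableEq m] [Ring R] [StarRing R]
    (A : Matrix l l R) (B : Matrix l m R) (C : Matrix m l R) (D : Matrix m m R) :
    fromBlocks 1 0 0 (-1) * (fromBlocks A B C D)ᴴ * fromBlocks 1 0 0 (-1) =
      fromBlocks Aᴴ (-Cᴴ) (-Bᴴ) Dᴴ := by
  simp [fromBlocks_conjTranspose, fromBlocks_multiply]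

theorem cos_smul_add_sin_smul_eq_exp_smul_add {V : Type*} [AddCommGroup V] [Module ℂ V]
    (θ : ℝ) (X Y : V) :
    (Real.cos θ : ℂ) • ((2 : ℂ)⁻¹ • (X + Y)) +
        (Real.sin θ : ℂ) • ((2 * Complex.I)⁻¹ • (X - Y)) =
      (Complex.exp (-(θ : ℂ) * Complex.I) / 2) • X +
        (star (Complex.exp (-(θ : ℂ) * Complex.I)) / 2) • Y := by
  have he : Complex.exp (-(θ : ℂ) * Complex.I) = Real.cos θ - Real.sin θ * Complex.I := by
    rw [← Complex.ofReal_neg, Complex.exp_ofReal_mul_I, Real.cos_neg, Real.sin_neg,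
      Complex.ofReal_neg]
    ring
  rw [he, mul_inv, Complex.inv_I]
  simp only [star_sub, star_mul', Complex.star_def, Complex.conj_ofReal, Complex.conj_I]
  module

theorem Matrix.cos_smul_add_sin_smul_fromBlocks_eq {m n : Type*} [Fintype m] [Fintype n]
    [DecidableEq m] [DecidableEq n] (θ : ℝ) (α β : ℂ) (C : Matrix m n ℂ) :
    (Real.cos θ : ℂ) • ((2 : ℂ)⁻¹ • (fromBlocks (α • 1) C 0 (β • 1) +
        fromBlocks 1 0 0 (-1) * (fromBlocks (α • 1) C 0 (β • 1))ᴴ * fromBlocks 1 0 0 (-1))) +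
      (Real.sin θ : ℂ) • ((2 * Complex.I)⁻¹ • (fromBlocks (α • 1) C 0 (β • 1) -
        fromBlocks 1 0 0 (-1) * (fromBlocks (α • 1) C 0 (β • 1))ᴴ * fromBlocks 1 0 0 (-1))) =
      fromBlocks (((Complex.exp (-(θ : ℂ) * Complex.I) * α).re : ℂ) • 1)
        ((Complex.exp (-(θ : ℂ) * Complex.I) / 2) • C)
        (-((Complex.exp (-(θ : ℂ) * Complex.I) / 2) • C)ᴴ)
        (((Complex.exp (-(θ : ℂ) * Complex.I) * β).re : ℂ) • 1) := by
  rw [fromBlocks_one_neg_one_mul_conjTranspose_mul, cos_smul_add_sin_smul_eq_exp_smul_add]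
  simp only [fromBlocks_smul, fromBlocks_add, conjTranspose_smul, conjTranspose_one,
    conjTranspose_zero, neg_zero, smul_zero, add_zero, zero_add, smul_smul, ← add_smul, smul_neg,
    Complex.re_eq_add_conj, star_div₀, star_ofNat]
  congr 2 <;> simp <;> ring

theorem Matrix.conjTranspose_smul_mul_smul {m n : Type*} [Fintype m] (w : ℂ)
    (C : Matrix m n ℂ) :
    (w • C)ᴴ * (w • C) = (Complex.normSq w : ℂ) • (Cᴴ * C) := by
  rw [conjTranspose_smul, Matrix.smul_mul, Matrix.mul_smul, smul_smul,
    Complex.normSq_eq_conj_mul_self]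
  rfl

theorem Complex.normSq_exp_neg_mul_I_div_two (θ : ℝ) :
    Complex.normSq (Complex.exp (-(θ : ℂ) * Complex.I) / 2) = 4⁻¹ := by
  rw [Complex.normSq_div, ← Complex.ofReal_neg, Complex.normSq_eq_norm_sq,
    Complex.norm_exp_ofReal_mul_I]
  norm_num

theorem Complex.re_exp_neg_mul_I_mul (θ : ℝ) (w : ℂ) :
    (Complex.exp (-(θ : ℂ) * Complex.I) * w).re = ‖w‖ * Real.cos (w.arg - θ) := by
  conv_lhs => rw [← Complex.norm_mul_exp_arg_mul_I w]
  rw [mul_left_comm, ← Complex.exp_add, ← add_mul, ← neg_add_eq_sub, ← Complex.ofReal_neg,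
    ← Complex.ofReal_add, Complex.re_ofReal_mul, Complex.exp_ofReal_mul_I_re]

theorem Real.cos_arctan_sqrt_sq_div_sq_sub_one {K L : ℝ} (hK : 0 < K) (hKL : K ≤ L) :
    Real.cos (Real.arctan (Real.sqrt (L ^ 2 / K ^ 2 - 1))) = K / L := by
  have hL : 0 < L := hK.trans_le hKL
  have h1 : 1 ≤ L ^ 2 / K ^ 2 := by
    rw [one_le_div (by positivity)]; nlinarith
  rw [Real.cos_arctan, Real.sq_sqrt (by linarith), add_sub_cancel, ← div_pow,
    Real.sqrt_sq (by positivity), one_div_div]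

theorem Complex.lt_re_exp_neg_mul_I_mul {w : ℂ} {K θ : ℝ} (hK : 0 ≤ K) (hKw : K < ‖w‖)
    (hθ : |w.arg - θ| < Real.arctan (Real.sqrt (‖w‖ ^ 2 / K ^ 2 - 1))) :
    K < (Complex.exp (-(θ : ℂ) * Complex.I) * w).re := by
  -- For `K = 0` the interval is empty: `√(‖w‖² / 0 - 1) = √(-1) = 0`.
  rcases hK.eq_or_lt with rfl | hK
  · norm_num [Real.sqrt_eq_zero_of_nonpos] at hθ
    exact absurd hθ (abs_nonneg _).not_gt
  have hθ₀ : Real.arctan (Real.sqrt (‖w‖ ^ 2 / K ^ 2 - 1)) ≤ Real.pi :=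
    (Real.arctan_lt_pi_div_two _).le.trans (by linarith [Real.pi_pos])
  have hcos := Real.cos_lt_cos_of_nonneg_of_le_pi (abs_nonneg _) hθ₀ hθ
  rw [Real.cos_abs, Real.cos_arctan_sqrt_sq_div_sq_sub_one hK hKw.le] at hcos
  rw [Complex.re_exp_neg_mul_I_mul]
  have hw : 0 < ‖w‖ := hK.trans hKw
  calc K = ‖w‖ * (K / ‖w‖) := by field_simp
    _ < ‖w‖ * Real.cos (w.arg - θ) := by gcongr

theorem Complex.exists_eq_ofReal_of_sub_mul_sub_eq {a b c : ℝ} {z : ℂ}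
    (h : (z - a) * (b - z) = c) (hc : 4 * c ≤ (a - b) ^ 2) :
    ∃ t : ℝ, t ^ 2 = ((a - b) / 2) ^ 2 - c ∧ z = ((a + b) / 2 + t : ℝ) := by
  have hd : 0 ≤ ((a - b) / 2) ^ 2 - c := by linarith
  set t := Real.sqrt (((a - b) / 2) ^ 2 - c)
  have ht : t ^ 2 = ((a - b) / 2) ^ 2 - c := Real.sq_sqrt hd
  have hsq : (z - ((a + b) / 2 : ℝ)) ^ 2 = (t : ℂ) ^ 2 := by
    rw [← Complex.ofReal_pow, ht]; push_cast; linear_combination -h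
  rcases sq_eq_sq_iff_eq_or_eq_neg.mp hsq with hz | hz
  · exact ⟨t, ht, by push_cast at hz ⊢; linear_combination hz⟩
  · exact ⟨-t, by rw [neg_sq, ht], by push_cast at hz ⊢; linear_combination hz⟩

theorem stmt16_general {r s : ℕ} (α β : ℂ)
    (C : Matrix (Fin r) (Fin s) ℂ)
    (J : Matrix (Fin r ⊕ Fin s) (Fin r ⊕ Fin s) ℂ)
    (hJ : J = Matrix.fromBlocks 1 0 0 (-1))
    (A : Matrix (Fin r ⊕ Fin s) (Fin r ⊕ Fin s) ℂ)
    (hA : A = Matrix.fromBlocks (α • 1) C 0 (β • 1))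
    (Cnorm : ℝ) (hCn0 : 0 ≤ Cnorm)
    (hCnMax : ∀ t : ℝ, (∃ v : Fin s → ℂ, v ≠ 0 ∧
      (Cᴴ * C).mulVec v = ((t : ℝ) : ℂ) • v) → t ≤ Cnorm ^ 2)
    (hsmall : Cnorm < ‖α - β‖)
    (τ θ₀ : ℝ) (hτ : τ = (α - β).arg)
    (hθ₀ : θ₀ = Real.arctan (Real.sqrt (‖α - β‖ ^ 2 / Cnorm ^ 2 - 1)))
    (θ : ℝ) (hθ : θ ∈ Set.Ioo (τ - θ₀) (τ + θ₀))
    (Hθ : Matrix (Fin r ⊕ Fin s) (Fin r ⊕ Fin s) ℂ)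
    (hHθ : Hθ = (Real.cos θ : ℂ) • ((2 : ℂ)⁻¹ • (A + J * Aᴴ * J)) +
      (Real.sin θ : ℂ) • ((2 * Complex.I)⁻¹ • (A - J * Aᴴ * J)))
    (Nθ : Matrix (Fin r) (Fin s) ℂ)
    (hN : Nθ = (Complex.exp (-(θ : ℂ) * Complex.I) / 2) • C) :
    ∀ z : ℂ, Hθ.charpoly.IsRoot z →
      z.im = 0 ∧
      (z = ((Complex.exp (-(θ : ℂ) * Complex.I) * α).re : ℂ) ∨
        ∃ sv t : ℝ, 0 ≤ sv ∧
          (∃ v : Fin s → ℂ, v ≠ 0 ∧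
            (Nθᴴ * Nθ).mulVec v = ((sv ^ 2 : ℝ) : ℂ) • v) ∧
          t ^ 2 = (Complex.exp (-(θ : ℂ) * Complex.I) * ((α - β) / 2)).re ^ 2 - sv ^ 2 ∧
          z = (((Complex.exp (-(θ : ℂ) * Complex.I) * (α + β)).re / 2 + t : ℝ) : ℂ)) := by
  intro z hz
  set e := Complex.exp (-(θ : ℂ) * Complex.I)
  obtain ⟨v, hv, hHv⟩ := exists_mulVec_eq_smul_of_isRoot_charpoly hz
  rw [hHθ, hA, hJ, cos_smul_add_sin_smul_fromBlocks_eq, ← hN] at hHv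
  obtain hza | ⟨y, hy, hNy⟩ := eq_or_exists_mul_mulVec_eq_of_fromBlocks_mulVec_eq hv hHv
  · exact ⟨by simp [hza], Or.inl hza⟩
  replace hNy : (Nθᴴ * Nθ) *ᵥ y = ((z - (e * α).re) * ((e * β).re - z)) • y := by
    rw [Matrix.neg_mul, neg_mulVec, neg_eq_iff_eq_neg] at hNy
    rw [hNy, ← neg_smul, ← mul_neg, neg_sub]
  obtain ⟨c, hc, hμ⟩ :=
    exists_nonneg_ofReal_eq_of_conjTranspose_mul_self_mulVec_eq_smul Nθ hy hNy
  have hCN : Cᴴ * C = (4 : ℂ) • (Nθᴴ * Nθ) := by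
    rw [hN, conjTranspose_smul_mul_smul, Complex.normSq_exp_neg_mul_I_div_two, smul_smul]
    norm_num
  have hCy : (Cᴴ * C) *ᵥ y = ((4 * c : ℝ) : ℂ) • y := by
    rw [hCN, smul_mulVec, hNy, ← hμ, smul_smul]
    norm_cast
  have hc4 : 4 * c ≤ Cnorm ^ 2 := hCnMax _ ⟨y, hy, hCy⟩
  have hR : Cnorm < (e * (α - β)).re := by
    refine Complex.lt_re_exp_neg_mul_I_mul hCn0 hsmall ?_
    rw [← hτ, ← hθ₀, abs_sub_lt_iff]; constructor <;> linarith [hθ.1, hθ.2]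
  rw [mul_sub, Complex.sub_re] at hR
  obtain ⟨t, ht, hzt⟩ := Complex.exists_eq_ofReal_of_sub_mul_sub_eq hμ.symm (by nlinarith)
  refine ⟨by simp [hzt], Or.inr ⟨√c, t, Real.sqrt_nonneg c, ⟨y, hy, ?_⟩, ?_, ?_⟩⟩
  · rw [Real.sq_sqrt hc, hNy, hμ]
  · rw [Real.sq_sqrt hc, ht, mul_div_assoc', Complex.div_ofNat_re, mul_sub, Complex.sub_re]
  · rw [hzt, mul_add, Complex.add_re]

theorem stmt16 {r s : ℕ} (hrs : s ≤ r) (α β : ℂ) (hab : α ≠ β)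
    (C : Matrix (Fin r) (Fin s) ℂ) (hC : C ≠ 0)
    (J : Matrix (Fin r ⊕ Fin s) (Fin r ⊕ Fin s) ℂ)
    (hJ : J = Matrix.fromBlocks 1 0 0 (-1))
    (A : Matrix (Fin r ⊕ Fin s) (Fin r ⊕ Fin s) ℂ)
    (hA : A = Matrix.fromBlocks (α • 1) C 0 (β • 1))
    (Cnorm : ℝ) (hCn0 : 0 ≤ Cnorm)
    (hCnEig : ∃ v : Fin s → ℂ, v ≠ 0 ∧
      (Cᴴ * C).mulVec v = ((Cnorm ^ 2 : ℝ) : ℂ) • v)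
    (hCnMax : ∀ t : ℝ, (∃ v : Fin s → ℂ, v ≠ 0 ∧
      (Cᴴ * C).mulVec v = ((t : ℝ) : ℂ) • v) → t ≤ Cnorm ^ 2)
    (hsmall : Cnorm < ‖α - β‖)
    (τ θ₀ : ℝ) (hτ : τ = (α - β).arg)
    (hθ₀ : θ₀ = Real.arctan (Real.sqrt (‖α - β‖ ^ 2 / Cnorm ^ 2 - 1)))
    (θ : ℝ) (hθ : θ ∈ Set.Ioo (τ - θ₀) (τ + θ₀))
    (Hθ : Matrix (Fin r ⊕ Fin s) (Fin r ⊕ Fin s) ℂ)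
    (hHθ : Hθ = (Real.cos θ : ℂ) • ((2 : ℂ)⁻¹ • (A + J * Aᴴ * J)) +
      (Real.sin θ : ℂ) • ((2 * Complex.I)⁻¹ • (A - J * Aᴴ * J)))
    (Nθ : Matrix (Fin r) (Fin s) ℂ)
    (hN : Nθ = (Complex.exp (-(θ : ℂ) * Complex.I) / 2) • C) :
    ∀ z : ℂ, Hθ.charpoly.IsRoot z →
      z.im = 0 ∧
      (z = ((Complex.exp (-(θ : ℂ) * Complex.I) * α).re : ℂ) ∨
        ∃ sv t : ℝ, 0 ≤ sv ∧
          (∃ v : Fin s → ℂ, v ≠ 0 ∧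
            (Nθᴴ * Nθ).mulVec v = ((sv ^ 2 : ℝ) : ℂ) • v) ∧
          t ^ 2 = (Complex.exp (-(θ : ℂ) * Complex.I) * ((α - β) / 2)).re ^ 2 - sv ^ 2 ∧
          z = (((Complex.exp (-(θ : ℂ) * Complex.I) * (α + β)).re / 2 + t : ℝ) : ℂ)) :=
  stmt16_general α β C J hJ A hA Cnorm hCn0 hCnMax hsmall τ θ₀ hτ hθ₀ θ hθ Hθ hHθ Nθ hN
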